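/- arXiv:1309.6522 — 2 statements merged into one kernel-verified Lean document; each statement's English description precedes it below -/
import Mathlib

section
/- (Combinatorial R-matrix on highest weight elements) Let r₁ ≤ r₂ and A ⊗ 0 be a classical highest weight element of B^{r₁,s₁} ⊗ B^{r₂,s₂}, with nonzero entries only at positions (r₁-j, r₂+j), 0 ≤ j ≤ k = min(r₁-1, n-r₂). Then the unique classical highest weight element Ã ⊗ 0 of B^{r₂,s₂} ⊗ B^{r₁,s₁} of the same classical weight has ã_{r₁-j, r₂+j} = a_{r₁-j, r₂+j} for all 0 ≤ j ≤ k (with à supported on the same antidiagonal, now viewed inside the r₂ × (n-r₂+1)-shaped polytope), i.e., the positions (r₁-j, r₂+j) lie in both index sets and the entries are equal. -/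
open Finset

/-- Matrices of the polytope model: entry `a p q` for row `p`, column `q`. -/
abbrev Mat := ℕ → ℕ → ℕ

/-- A monotone lattice path `β(1) = (1,i), …, β(n) = (i,n)`: each step increases
the row or the column index by 1. -/
def IsPath (n i : ℕ) (β : ℕ → ℕ × ℕ) : Prop :=
  β 1 = (1, i) ∧ β n = (i, n) ∧
    ∀ s, 1 ≤ s → s < n →
      β (s + 1) = ((β s).1 + 1, (β s).2) ∨ β (s + 1) = ((β s).1, (β s).2 + 1)

/-- Membership in the Kirillov–Reshetikhin polytope `B^{i,m}` of type `A_n^{(1)}`: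
non-negative integer matrices indexed by `1 ≤ p ≤ i`, `i ≤ q ≤ n` (zero outside),
all of whose monotone lattice-path sums are at most `m`. -/
def MemKR (n i m : ℕ) (a : Mat) : Prop :=
  (∀ p q, ¬(1 ≤ p ∧ p ≤ i ∧ i ≤ q ∧ q ≤ n) → a p q = 0) ∧
  ∀ β : ℕ → ℕ × ℕ, IsPath n i β → ∑ s ∈ Icc 1 n, a (β s).1 (β s).2 ≤ m

/-- The set of maximizers of `F` on `S`. -/
def maximizers (S : Finset ℕ) (F : ℕ → ℕ) : Finset ℕ :=
  S.filter fun q => ∀ q' ∈ S, F q' ≤ F q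

/-- Smallest maximizer. -/
def argmaxLow (S : Finset ℕ) (F : ℕ → ℕ) : ℕ := WithTop.untopD 0 (maximizers S F).min

/-- Largest maximizer. -/
def argmaxHigh (S : Finset ℕ) (F : ℕ → ℕ) : ℕ := WithBot.unbotD 0 (maximizers S F).max

/-- For `l > i`: `G(q) = Σ_{j=1}^q a_{j,l-1} + Σ_{j=q}^i a_{j,l}`. -/
def Gplus (i : ℕ) (a : Mat) (l q : ℕ) : ℕ :=
  ∑ j ∈ Icc 1 q, a j (l - 1) + ∑ j ∈ Icc q i, a j l

/-- For `l < i`: `F(q) = Σ_{j=i}^q a_{l,j} + Σ_{j=q}^n a_{l+1,j}`. -/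
def Fminus (n i : ℕ) (a : Mat) (l q : ℕ) : ℕ :=
  ∑ j ∈ Icc i q, a l j + ∑ j ∈ Icc q n, a (l + 1) j

def pPlus (i : ℕ) (a : Mat) (l : ℕ) : ℕ := argmaxLow (Icc 1 i) (Gplus i a l)
def qPlus (i : ℕ) (a : Mat) (l : ℕ) : ℕ := argmaxHigh (Icc 1 i) (Gplus i a l)
def pMinus (n i : ℕ) (a : Mat) (l : ℕ) : ℕ := argmaxHigh (Icc i n) (Fminus n i a l)
def qMinus (n i : ℕ) (a : Mat) (l : ℕ) : ℕ := argmaxLow (Icc i n) (Fminus n i a l)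

/-- The statistic `φ_l` of the polytope model (`l = 0` is the affine one). -/
def phi (n i m : ℕ) (a : Mat) (l : ℕ) : ℤ :=
  if l = 0 then (a 1 n : ℤ)
  else if l = i then
    (m : ℤ) - ∑ j ∈ Icc 1 (i - 1), (a j i : ℤ) - ∑ j ∈ Icc i n, (a i j : ℤ)
  else if i < l then
    ∑ j ∈ Icc 1 (pPlus i a l), (a j (l - 1) : ℤ)
      - ∑ j ∈ Icc 1 (pPlus i a l - 1), (a j l : ℤ)
  else
    ∑ j ∈ Icc (pMinus n i a l) n, (a (l + 1) j : ℤ)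
      - ∑ j ∈ Icc (pMinus n i a l + 1) n, (a l j : ℤ)

/-- The statistic `ε_l` of the polytope model (`l = 0` is the affine one). -/
def eps (n i m : ℕ) (a : Mat) (l : ℕ) : ℤ :=
  if l = 0 then
    (m : ℤ) - ∑ j ∈ Icc i n, (a 1 j : ℤ) - ∑ j ∈ Icc 2 n, (a j n : ℤ)
  else if l = i then (a i i : ℤ)
  else if i < l then
    ∑ j ∈ Icc (qPlus i a l) i, (a j l : ℤ)
      - ∑ j ∈ Icc (qPlus i a l + 1) i, (a j (l - 1) : ℤ)
  else
    ∑ j ∈ Icc i (qMinus n i a l), (a l j : ℤ)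
      - ∑ j ∈ Icc i (qMinus n i a l - 1), (a (l + 1) j : ℤ)

/-- Update one entry of a matrix. -/
def upd (a : Mat) (p q v : ℕ) : Mat :=
  fun p' q' => if p' = p ∧ q' = q then v else a p' q'

/-- The Kashiwara raising operator `ẽ_l` on `B^{i,m}` (`l = 0` affine). -/
def eOp (n i m : ℕ) (a : Mat) (l : ℕ) : Option Mat :=
  if eps n i m a l ≤ 0 then none
  else some (
    if l = 0 then upd a 1 n (a 1 n + 1)
    else if l = i then upd a i i (a i i - 1)
    else if i < l then
      upd (upd a (qPlus i a l) (l - 1) (a (qPlus i a l) (l - 1) + 1))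
        (qPlus i a l) l (a (qPlus i a l) l - 1)
    else
      upd (upd a l (qMinus n i a l) (a l (qMinus n i a l) - 1))
        (l + 1) (qMinus n i a l) (a (l + 1) (qMinus n i a l) + 1))

/-- The Kashiwara lowering operator `f̃_l` on `B^{i,m}` (`l = 0` affine). -/
def fOp (n i m : ℕ) (a : Mat) (l : ℕ) : Option Mat :=
  if phi n i m a l ≤ 0 then none
  else some (
    if l = 0 then upd a 1 n (a 1 n - 1)
    else if l = i then upd a i i (a i i + 1)
    else if i < l then
      upd (upd a (pPlus i a l) (l - 1) (a (pPlus i a l) (l - 1) - 1))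
        (pPlus i a l) l (a (pPlus i a l) l + 1)
    else
      upd (upd a l (pMinus n i a l) (a l (pMinus n i a l) + 1))
        (l + 1) (pMinus n i a l) (a (l + 1) (pMinus n i a l) - 1))

/-- `ẽ_l` on the tensor product `B^{r₁,s₁} ⊗ B^{r₂,s₂}`. -/
def eTen (n r₁ s₁ r₂ s₂ l : ℕ) (x : Mat × Mat) : Option (Mat × Mat) :=
  if phi n r₂ s₂ x.2 l < eps n r₁ s₁ x.1 l then
    (eOp n r₁ s₁ x.1 l).map fun a' => (a', x.2)
  else (eOp n r₂ s₂ x.2 l).map fun b' => (x.1, b')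

/-- `f̃_l` on the tensor product `B^{r₁,s₁} ⊗ B^{r₂,s₂}`. -/
def fTen (n r₁ s₁ r₂ s₂ l : ℕ) (x : Mat × Mat) : Option (Mat × Mat) :=
  if phi n r₂ s₂ x.2 l ≤ eps n r₁ s₁ x.1 l then
    (fOp n r₁ s₁ x.1 l).map fun a' => (a', x.2)
  else (fOp n r₂ s₂ x.2 l).map fun b' => (x.1, b')

/-- Classical highest weight element of the tensor product. -/
def IsHW (n r₁ s₁ r₂ s₂ : ℕ) (x : Mat × Mat) : Prop :=
  ∀ l, 1 ≤ l → l ≤ n → eTen n r₁ s₁ r₂ s₂ l x = none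

/-- Cartan matrix of type `A_n`: `⟨α_r, α_j^∨⟩`. -/
def cartan (r j : ℕ) : ℤ :=
  if r = j then 2 else if r + 1 = j ∨ j + 1 = r then -1 else 0

/-- The pairing `⟨wt(A), α_j^∨⟩` where `wt(A) = m ω_i - Σ a_{p,q} α_{p,q}`,
and `α_{p,q} = α_p + ⋯ + α_q`. -/
def wtCoord (n i m : ℕ) (a : Mat) (j : ℕ) : ℤ :=
  (if j = i then (m : ℤ) else 0)
    - ∑ p ∈ Icc 1 i, ∑ q ∈ Icc i n, (a p q : ℤ) * ∑ r ∈ Icc p q, cartan r j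

/-- The matrix `b^Λ` with `(p,q)`-entry `c ((p+q) mod (n+1))` on the index range. -/
def bOf (n i : ℕ) (c : ℕ → ℕ) : Mat :=
  fun p q => if 1 ≤ p ∧ p ≤ i ∧ i ≤ q ∧ q ≤ n then c ((p + q) % (n + 1)) else 0

/-!
If `a ⊗ 0` is classically highest weight in `B^{i,m} ⊗ B^{r,s}`, then `ε_l(a) ≤ 0` for all
`l ≠ r`, since `φ_l(0) = 0` there. Unwinding the maximizers that define `ε_l`, these
inequalities force `a` onto the antidiagonal `p + q = i + r`. For `A` and `A'` this is the same
antidiagonal `{(p, r₁ + r₂ - p) : 1 ≤ p ≤ r₁}`, so both weights are combinations of the same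
roots `α_{p, r₁+r₂-p}`, and pairing with `α_1^∨, …, α_{r₁}^∨` gives a triangular system for the
coefficients.
-/

lemma sum_Icc_add_sum_Icc {M : Type*} [AddCommMonoid M] (f : ℕ → M) {a b c : ℕ}
    (hab : a ≤ b + 1) (hbc : b ≤ c) :
    ∑ j ∈ Icc a b, f j + ∑ j ∈ Icc (b + 1) c, f j = ∑ j ∈ Icc a c, f j := by
  simp only [← Ico_add_one_right_eq_Icc]
  exact sum_Ico_consecutive f hab (by omega)

lemma maximizers_nonempty {S : Finset ℕ} (F : ℕ → ℕ) (hS : S.Nonempty) :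
    (maximizers S F).Nonempty := by
  obtain ⟨b, hb, hmax⟩ := S.exists_max_image F hS
  exact ⟨b, mem_filter.2 ⟨hb, hmax⟩⟩

lemma argmaxHigh_mem {S : Finset ℕ} (F : ℕ → ℕ) (hS : S.Nonempty) :
    argmaxHigh S F ∈ maximizers S F := by
  have hne := maximizers_nonempty F hS
  rw [argmaxHigh, ← coe_max' hne]
  exact max'_mem _ hne

lemma argmaxLow_mem {S : Finset ℕ} (F : ℕ → ℕ) (hS : S.Nonempty) :
    argmaxLow S F ∈ maximizers S F := by
  have hne := maximizers_nonempty F hS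
  rw [argmaxLow, ← coe_min' hne]
  exact min'_mem _ hne

section Eps

variable {n i m : ℕ} {a : Mat} {l : ℕ}

/-- For `l > i`, `ε_l ≤ 0` compares the two halves of `Gplus` at its maximizer `qPlus`;
since every other value of `Gplus` is smaller, the comparison holds at every `q`. -/
lemma sum_col_le_of_eps_nonpos (hi : 1 ≤ i) (hil : i < l) (h : eps n i m a l ≤ 0)
    {q : ℕ} (hq : 1 ≤ q) (hqi : q ≤ i) :
    ∑ j ∈ Icc q i, a j l ≤ ∑ j ∈ Icc (q + 1) i, a j (l - 1) := by
  rw [eps, if_neg (by omega), if_neg (by omega), if_pos hil, sub_nonpos] at h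
  have hmem : qPlus i a l ∈ maximizers (Icc 1 i) (Gplus i a l) :=
    argmaxHigh_mem _ ⟨1, by simp; omega⟩
  set P := qPlus i a l
  obtain ⟨hP, hPmax⟩ := mem_filter.1 hmem
  have hGq : Gplus i a l q ≤ Gplus i a l P := hPmax q (by simp; omega)
  have hP' : ∑ j ∈ Icc P i, a j l ≤ ∑ j ∈ Icc (P + 1) i, a j (l - 1) := by exact_mod_cast h
  rw [mem_Icc] at hP
  have hsplitP := sum_Icc_add_sum_Icc (fun j => a j (l - 1)) (Nat.le_succ_of_le hP.1) hP.2
  have hsplitq := sum_Icc_add_sum_Icc (fun j => a j (l - 1)) (Nat.le_succ_of_le hq) hqi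
  simp only [Gplus] at hGq
  omega

lemma sum_row_le_of_eps_nonpos (hl : 1 ≤ l) (hli : l < i) (hin : i ≤ n)
    (h : eps n i m a l ≤ 0) {q : ℕ} (hiq : i ≤ q) (hqn : q ≤ n) :
    ∑ j ∈ Icc i q, a l j ≤ ∑ j ∈ Icc i (q - 1), a (l + 1) j := by
  rw [eps, if_neg (by omega), if_neg (by omega), if_neg (by omega), sub_nonpos] at h
  have hmem : qMinus n i a l ∈ maximizers (Icc i n) (Fminus n i a l) :=
    argmaxLow_mem _ ⟨i, by simp; omega⟩
  set P := qMinus n i a l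
  obtain ⟨hP, hPmax⟩ := mem_filter.1 hmem
  have hFq : Fminus n i a l q ≤ Fminus n i a l P := hPmax q (by simp; omega)
  have hP' : ∑ j ∈ Icc i P, a l j ≤ ∑ j ∈ Icc i (P - 1), a (l + 1) j := by exact_mod_cast h
  rw [mem_Icc] at hP
  have hsplit : ∀ b, i ≤ b → b ≤ n →
      ∑ j ∈ Icc i (b - 1), a (l + 1) j + ∑ j ∈ Icc b n, a (l + 1) j =
        ∑ j ∈ Icc i n, a (l + 1) j := fun b hib hbn => by
    have := sum_Icc_add_sum_Icc (fun j => a (l + 1) j) (a := i) (b := b - 1) (c := n)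
      (by omega) (by omega)
    rwa [Nat.sub_add_cancel (by omega)] at this
  have hsplitP := hsplit P hP.1 hP.2
  have hsplitq := hsplit q hiq hqn
  simp only [Fminus] at hFq
  omega

end Eps

section Support

variable {n i m r : ℕ} {a : Mat}

lemma phi_zero_of_ne {l : ℕ} (hl : l ≠ 0) (hli : l ≠ i) : phi n i m (fun _ _ => 0) l = 0 := by
  rw [phi, if_neg hl, if_neg hli]
  split_ifs <;> simp

/-- `ẽ_l (a ⊗ 0)` acts on the first factor as soon as `ε_l(a) > φ_l(0) = 0`. -/
lemma eps_nonpos_of_isHW {s : ℕ} (hhw : IsHW n i m r s (a, fun _ _ => 0))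
    {l : ℕ} (hl : 1 ≤ l) (hln : l ≤ n) (hlr : l ≠ r) : eps n i m a l ≤ 0 := by
  have h := hhw l hl hln
  rw [eTen, phi_zero_of_ne (by omega) hlr] at h
  dsimp only at h
  by_contra hpos
  rw [if_pos (by omega), eOp, if_neg hpos] at h
  simp at h

lemma eq_zero_of_eps_nonpos_col (hi : 1 ≤ i) {p q : ℕ} (hp : 1 ≤ p) (hpi : p ≤ i) (hiq : i < q)
    (h : eps n i m a q ≤ 0) (hcol : ∀ j, p < j → a j (q - 1) = 0) : a p q = 0 := by
  have hle := sum_col_le_of_eps_nonpos hi hiq h hp hpi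
  rw [sum_eq_zero fun j hj => hcol j (by simp at hj; omega), Nat.le_zero,
    sum_eq_zero_iff] at hle
  exact hle p (by simp; omega)

lemma eq_zero_of_eps_nonpos_row {p q : ℕ} (hp : 1 ≤ p) (hpi : p < i) (hin : i ≤ n)
    (h : eps n i m a p ≤ 0) (hiq : i ≤ q) (hqn : q ≤ n) (hrow : ∀ j, j < q → a (p + 1) j = 0) :
    a p q = 0 := by
  have hle := sum_row_le_of_eps_nonpos hp hpi hin h hiq hqn
  rw [sum_eq_zero fun j hj => hrow j (by simp at hj; omega), Nat.le_zero,
    sum_eq_zero_iff] at hle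
  exact hle q (by simp; omega)

/-- Rows are cleared from the bottom up, each entry through the `ε` of its row or of its
column. -/
lemma eq_zero_of_add_ne_of_eps_nonpos (hi : 1 ≤ i) (hin : i ≤ n) (ha : MemKR n i m a)
    (heps : ∀ l, 1 ≤ l → l ≤ n → l ≠ r → eps n i m a l ≤ 0) :
    ∀ p q, p + q ≠ i + r → a p q = 0 := by
  intro p
  induction p using Nat.strong_decreasing_induction with
  | base => exact ⟨i, fun p hp q _ => ha.1 p q (by omega)⟩
  | step p ih =>
    intro q hpq
    by_cases hrange : 1 ≤ p ∧ p ≤ i ∧ i ≤ q ∧ q ≤ n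
    swap
    · exact ha.1 p q hrange
    have hbelow : ∀ p' q', p < p' → (p' + q' ≠ i + r ∨ ¬(p' ≤ i ∧ i ≤ q')) → a p' q' = 0 :=
      fun p' q' hp' h => h.elim (ih p' hp' q') fun h => ha.1 p' q' (by omega)
    by_cases hcorner : p = i ∧ q = i
    · have h := heps i hi hin (by omega)
      rw [eps, if_neg (by omega), if_pos rfl] at h
      rw [hcorner.1, hcorner.2]
      omega
    by_cases hcol : i < q ∧ (i + r < p + q ∨ p = i)
    · exact eq_zero_of_eps_nonpos_col hi hrange.1 hrange.2.1 hcol.1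
        (heps q (by omega) hrange.2.2.2 (by omega)) fun j hj => hbelow j _ hj (by omega)
    · exact eq_zero_of_eps_nonpos_row hrange.1 (by omega) hin
        (heps p hrange.1 (by omega) (by omega)) hrange.2.2.1 hrange.2.2.2
        fun j hj => hbelow (p + 1) j (by omega) (by omega)

lemma support_of_isHW {s : ℕ} (hi : 1 ≤ i) (hin : i ≤ n) (ha : MemKR n i m a)
    (hhw : IsHW n i m r s (a, fun _ _ => 0)) {p q : ℕ} (hpq : a p q ≠ 0) :
    p + q = i + r ∧ 1 ≤ p ∧ p ≤ i ∧ i ≤ q ∧ q ≤ n := by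
  have hanti := eq_zero_of_add_ne_of_eps_nonpos hi hin ha (fun _ => eps_nonpos_of_isHW hhw) p q
  have hrange := ha.1 p q
  omega

end Support

section Weight

/-- `⟨α_p + ⋯ + α_q, α_j^∨⟩ = ⟨ε_p - ε_{q+1}, ε_j - ε_{j+1}⟩`. -/
lemma sum_cartan_Icc {p q j : ℕ} (hj : 1 ≤ j) (hpq : p ≤ q) :
    ∑ x ∈ Icc p q, cartan x j = (if p = j then 1 else 0) - (if p = j + 1 then 1 else 0)
      + (if q = j then 1 else 0) - (if q + 1 = j then 1 else 0) := by
  have hcartan : ∀ x, cartan x j = (if x = j then 2 else 0) + (if x = j + 1 then -1 else 0)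
      + (if x = j - 1 then -1 else 0) := fun x => by
    unfold cartan
    split_ifs <;> omega
  simp only [hcartan, sum_add_distrib, sum_ite_eq', mem_Icc]
  split_ifs <;> omega

lemma wtCoord_zero (n i m j : ℕ) :
    wtCoord n i m (fun _ _ => 0) j = if j = i then (m : ℤ) else 0 := by
  simp [wtCoord]

lemma sum_sum_eq_sum_antidiagonal {n i k c : ℕ} {a : Mat} (f : ℕ → ℕ → ℤ) (hki : k ≤ i)
    (ha : ∀ p q, a p q ≠ 0 → p + q = c ∧ 1 ≤ p ∧ p ≤ k ∧ i ≤ q ∧ q ≤ n) :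
    ∑ p ∈ Icc 1 i, ∑ q ∈ Icc i n, (a p q : ℤ) * f p q =
      ∑ p ∈ Icc 1 k, (a p (c - p) : ℤ) * f p (c - p) := by
  have hzero : ∀ p q, ¬(p + q = c ∧ 1 ≤ p ∧ p ≤ k ∧ i ≤ q ∧ q ≤ n) → a p q = 0 :=
    fun p q h => by_contra fun hne => h (ha p q hne)
  rw [← sum_subset (Icc_subset_Icc_right hki)]
  · refine sum_congr rfl fun p hp => ?_
    rw [sum_eq_single (c - p)]
    · intro q _ hq
      rw [hzero p q (by omega), Nat.cast_zero, zero_mul]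
    · intro hq
      rw [hzero p (c - p) (by simp at hq; omega), Nat.cast_zero, zero_mul]
  · intro p _ hp
    refine sum_eq_zero fun q _ => ?_
    rw [hzero p q (by simp at hp; omega), Nat.cast_zero, zero_mul]

lemma sum_mul_sum_cartan_antidiagonal (D : ℕ → ℤ) {k l j : ℕ} (hkl : k ≤ l) (hj : 1 ≤ j)
    (hjk : j ≤ k) :
    ∑ p ∈ Icc 1 k, D p * ∑ x ∈ Icc p (k + l - p), cartan x j =
      D j - (if j < k then D (j + 1) else 0) + (if j = l then D j else 0) := by
  have hterm : ∀ p ∈ Icc 1 k, D p * ∑ x ∈ Icc p (k + l - p), cartan x j =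
      (if j = p then D p else 0) - (if j + 1 = p then D p else 0)
        + (if j = p then (if j = l then D p else 0) else 0) := fun p hp => by
    rw [mem_Icc] at hp
    rw [sum_cartan_Icc hj (by omega)]
    split_ifs <;> omega
  rw [sum_congr rfl hterm, sum_add_distrib, sum_sub_distrib, sum_ite_eq, sum_ite_eq, sum_ite_eq]
  simp only [mem_Icc]
  split_ifs <;> omega

/-- The pairings with `α_1^∨, …, α_k^∨` form a triangular system in the coefficients of the
roots `α_{p, k+l-p}`. -/
lemma eq_zero_of_sum_mul_sum_cartan_eq_zero {D : ℕ → ℤ} {k l : ℕ} (hkl : k ≤ l)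
    (h : ∀ j, 1 ≤ j → j ≤ k → ∑ p ∈ Icc 1 k, D p * ∑ x ∈ Icc p (k + l - p), cartan x j = 0) :
    ∀ p, 1 ≤ p → p ≤ k → D p = 0 := by
  intro p
  induction p using Nat.strong_decreasing_induction with
  | base => exact ⟨k, fun p hp _ hpk => absurd hpk (by omega)⟩
  | step p ih =>
    intro hp hpk
    have hpair := h p hp hpk
    have hnext : p < k → D (p + 1) = 0 := fun hlt => ih (p + 1) (by omega) (by omega) hlt
    rw [sum_mul_sum_cartan_antidiagonal D hkl hp hpk] at hpair
    split_ifs at hpair <;> omega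

end Weight

/-- if `A ⊗ 0` is a classical highest weight element of
`B^{r₁,s₁} ⊗ B^{r₂,s₂}` and `A' ⊗ 0` one of `B^{r₂,s₂} ⊗ B^{r₁,s₁}` of the same
classical weight, then the antidiagonal positions lie in both index sets and the
entries agree: `ã_{r₁-j, r₂+j} = a_{r₁-j, r₂+j}` for `0 ≤ j ≤ k`. -/
theorem stmt11 (n r₁ s₁ r₂ s₂ : ℕ) (h1 : 1 ≤ r₁) (h12 : r₁ ≤ r₂) (h2n : r₂ ≤ n)
    (A A' : Mat) (hA : MemKR n r₁ s₁ A) (hA' : MemKR n r₂ s₂ A')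
    (hhwA : IsHW n r₁ s₁ r₂ s₂ (A, fun _ _ => 0))
    (hhwA' : IsHW n r₂ s₂ r₁ s₁ (A', fun _ _ => 0))
    (hwt : ∀ j, 1 ≤ j → j ≤ n →
      wtCoord n r₁ s₁ A j + wtCoord n r₂ s₂ (fun _ _ => 0) j =
        wtCoord n r₂ s₂ A' j + wtCoord n r₁ s₁ (fun _ _ => 0) j) :
    ∀ j, j ≤ min (r₁ - 1) (n - r₂) →
      (1 ≤ r₁ - j ∧ r₁ - j ≤ r₂ ∧ r₂ ≤ r₂ + j ∧ r₂ + j ≤ n) ∧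
      A' (r₁ - j) (r₂ + j) = A (r₁ - j) (r₂ + j) := by
  have hsuppA : ∀ p q, A p q ≠ 0 → p + q = r₁ + r₂ ∧ 1 ≤ p ∧ p ≤ r₁ ∧ r₁ ≤ q ∧ q ≤ n :=
    fun p q hpq => support_of_isHW h1 (h12.trans h2n) hA hhwA hpq
  have hsuppA' : ∀ p q, A' p q ≠ 0 → p + q = r₁ + r₂ ∧ 1 ≤ p ∧ p ≤ r₁ ∧ r₂ ≤ q ∧ q ≤ n :=
    fun p q hpq => by
      have := support_of_isHW (h1.trans h12) h2n hA' hhwA' hpq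
      omega
  have hpair : ∀ j, 1 ≤ j → j ≤ r₁ → ∑ p ∈ Icc 1 r₁,
      ((A p (r₁ + r₂ - p) : ℤ) - A' p (r₁ + r₂ - p)) *
        ∑ x ∈ Icc p (r₁ + r₂ - p), cartan x j = 0 := by
    intro j hj hjr
    have h := hwt j hj (by omega)
    rw [wtCoord_zero, wtCoord_zero, wtCoord, wtCoord,
      sum_sum_eq_sum_antidiagonal (fun p q => ∑ x ∈ Icc p q, cartan x j) le_rfl hsuppA,
      sum_sum_eq_sum_antidiagonal (fun p q => ∑ x ∈ Icc p q, cartan x j) h12 hsuppA'] at h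
    simp only [sub_mul, sum_sub_distrib]
    split_ifs at h <;> linarith
  have hdiag := eq_zero_of_sum_mul_sum_cartan_eq_zero h12 hpair
  intro j hj
  have hentry := hdiag (r₁ - j) (by omega) (by omega)
  rw [show r₁ + r₂ - (r₁ - j) = r₂ + j by omega] at hentry
  exact ⟨by omega, by omega⟩
end

section
/- (Uniqueness of b_Λ) Suppose A ∈ B^{i,ℓ} satisfies ε_l(A) = a_l for all l = 0,…,n, where (a₀,…,a_n) are non-negative integers with Σ_j a_j = ℓ. Then A = b_Λ, i.e., A_{p,q} = a_{p+q-i} for all 1 ≤ p ≤ i, i ≤ q ≤ n. -/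
open Finset

/-!
Each `ε_l` with `l ≠ 0, i` is the value of a function at its maximizer, minus a constant, so
evaluating at a fixed argument gives a lower bound: `ε_l ≥ a_{i,l}` for `l > i` and
`ε_l ≥ Σ_j a_{l,j} - Σ_j a_{l+1,j} + a_{l+1,n}` for `0 < l < i`. Together with `ε_0` and
`ε_i = a_{i,i}` these bounds telescope to `ℓ`, so `Σ ε_l = ℓ` forces all of them to be attained,
and the fixed argument is itself a maximizer. This gives row `i` directly. The rows above are
recovered upwards: once the rows below `p` are known, maximality at `q = p` bounds each entry
`a_{p,l}` by `c_{p+l-i}`, while the attained bound for `ε_p` fixes the sum of row `p`, so every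
one of these inequalities is an equality.
-/

namespace Finset

variable {M : Type*} [AddCommMonoid M] (f : ℕ → M)

lemma sum_Icc_consecutive {a r b : ℕ} (har : a ≤ r + 1) (hrb : r ≤ b) :
    ∑ j ∈ Icc a b, f j = ∑ j ∈ Icc a r, f j + ∑ j ∈ Icc (r + 1) b, f j := by
  simp only [← Ico_add_one_right_eq_Icc]
  exact (sum_Ico_consecutive f har (by omega)).symm

lemma sum_Icc_succ_left (r b : ℕ) :
    ∑ j ∈ Icc (r + 1) b, f j = ∑ j ∈ Ico r b, f (j + 1) := by
  rw [sum_Ico_add', Ico_add_one_right_eq_Icc]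

lemma sum_Icc_eq_sum_Ico_add_top {a b : ℕ} (hab : a ≤ b) :
    ∑ j ∈ Icc a b, f j = ∑ j ∈ Ico a b, f j + f b := by
  rw [← Ico_add_one_right_eq_Icc, sum_Ico_succ_top hab]

end Finset

lemma argmaxHigh_mem_maximizers {S : Finset ℕ} (hS : S.Nonempty) (F : ℕ → ℕ) :
    argmaxHigh S F ∈ maximizers S F := by
  obtain ⟨q, hq, hmax⟩ := S.exists_max_image F hS
  have hne : (maximizers S F).Nonempty := ⟨q, mem_filter.2 ⟨hq, hmax⟩⟩
  rw [argmaxHigh, ← coe_max' hne]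
  exact max'_mem _ hne

lemma argmaxLow_mem_maximizers {S : Finset ℕ} (hS : S.Nonempty) (F : ℕ → ℕ) :
    argmaxLow S F ∈ maximizers S F := by
  obtain ⟨q, hq, hmax⟩ := S.exists_max_image F hS
  have hne : (maximizers S F).Nonempty := ⟨q, mem_filter.2 ⟨hq, hmax⟩⟩
  rw [argmaxLow, ← coe_min' hne]
  exact min'_mem _ hne

lemma mem_maximizers {S : Finset ℕ} {F : ℕ → ℕ} {q : ℕ} :
    q ∈ maximizers S F ↔ q ∈ S ∧ ∀ q' ∈ S, F q' ≤ F q :=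
  mem_filter

section Epsilon

variable {n i m : ℕ} {a : Mat}

lemma Gplus_le_Gplus_qPlus {l r : ℕ} (hr : r ∈ Icc 1 i) :
    Gplus i a l r ≤ Gplus i a l (qPlus i a l) :=
  (mem_maximizers.1 (argmaxHigh_mem_maximizers ⟨r, hr⟩ _)).2 r hr

lemma Fminus_le_Fminus_qMinus {l r : ℕ} (hr : r ∈ Icc i n) :
    Fminus n i a l r ≤ Fminus n i a l (qMinus n i a l) :=
  (mem_maximizers.1 (argmaxLow_mem_maximizers ⟨r, hr⟩ _)).2 r hr

lemma qPlus_mem_Icc (hi : 1 ≤ i) (l : ℕ) : qPlus i a l ∈ Icc 1 i :=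
  (mem_maximizers.1 (argmaxHigh_mem_maximizers (nonempty_Icc.2 hi) _)).1

lemma qMinus_mem_Icc (hin : i ≤ n) (l : ℕ) : qMinus n i a l ∈ Icc i n :=
  (mem_maximizers.1 (argmaxLow_mem_maximizers (nonempty_Icc.2 hin) _)).1

lemma Gplus_add_sum_Ico {l r : ℕ} (hr : r ≤ i) :
    Gplus i a l r + ∑ s ∈ Ico r i, a (s + 1) (l - 1) = Gplus i a l i + ∑ s ∈ Ico r i, a s l := by
  rw [Gplus, Gplus, sum_Icc_consecutive (fun j => a j (l - 1)) (by omega : 1 ≤ r + 1) hr,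
    sum_Icc_succ_left _ r i, sum_Icc_eq_sum_Ico_add_top (fun j => a j l) hr, Icc_self,
    sum_singleton]
  ring

lemma eps_eq_Gplus_sub (hi : 1 ≤ i) {l : ℕ} (hil : i < l) :
    eps n i m a l = a i l + ((Gplus i a l (qPlus i a l) : ℤ) - Gplus i a l i) := by
  have hq := mem_Icc.1 (qPlus_mem_Icc (a := a) hi l)
  have key := Gplus_add_sum_Ico (a := a) (l := l) hq.2
  rw [eps, if_neg (by omega), if_neg (by omega), if_pos hil,
    sum_Icc_eq_sum_Ico_add_top (fun j => (a j l : ℤ)) hq.2, sum_Icc_succ_left]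
  zify at key
  linarith

lemma eps_eq_Fminus_sub {l : ℕ} (hl : 1 ≤ l) (hli : l < i) (hin : i ≤ n) :
    eps n i m a l = (Fminus n i a l (qMinus n i a l) : ℤ) - ∑ j ∈ Icc i n, (a (l + 1) j : ℤ) := by
  have hq := mem_Icc.1 (qMinus_mem_Icc (a := a) hin l)
  rw [eps, if_neg (by omega), if_neg (by omega), if_neg (by omega), Fminus]
  set q := qMinus n i a l
  rw [sum_Icc_consecutive (fun j => (a (l + 1) j : ℤ)) (b := n) (by omega : i ≤ q - 1 + 1)
    (by omega), Nat.sub_add_cancel (by omega)]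
  push_cast
  ring

/-- Evaluating the maximized function at the fixed argument `q = n` (for `0 < l < i`) or `q = i`
(for `l > i`) instead of at the maximizer gives this lower bound of `ε_l`. -/
def epsLowerBound (n i m : ℕ) (a : Mat) (l : ℕ) : ℤ :=
  if l = 0 then eps n i m a 0
  else if l < i then (Fminus n i a l n : ℤ) - ∑ j ∈ Icc i n, (a (l + 1) j : ℤ)
  else a i l

lemma epsLowerBound_of_le (hi : 1 ≤ i) {l : ℕ} (hil : i ≤ l) :
    epsLowerBound n i m a l = a i l := by
  rw [epsLowerBound, if_neg (by omega), if_neg (by omega)]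

lemma epsLowerBound_of_lt {l : ℕ} (hl : 1 ≤ l) (hli : l < i) :
    epsLowerBound n i m a l = (Fminus n i a l n : ℤ) - ∑ j ∈ Icc i n, (a (l + 1) j : ℤ) := by
  rw [epsLowerBound, if_neg (by omega), if_pos hli]

lemma epsLowerBound_le_eps (hi : 1 ≤ i) (hin : i ≤ n) (l : ℕ) :
    epsLowerBound n i m a l ≤ eps n i m a l := by
  rcases Nat.eq_zero_or_pos l with rfl | hl
  · simp [epsLowerBound]
  rcases lt_trichotomy l i with hli | rfl | hil
  · have := Fminus_le_Fminus_qMinus (a := a) (l := l) (right_mem_Icc.2 hin)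
    rw [epsLowerBound_of_lt hl hli, eps_eq_Fminus_sub hl hli hin]
    omega
  · rw [epsLowerBound_of_le hi le_rfl, eps, if_neg (by omega), if_pos rfl]
  · have := Gplus_le_Gplus_qPlus (a := a) (l := l) (right_mem_Icc.2 hi)
    rw [epsLowerBound_of_le hi hil.le, eps_eq_Gplus_sub hi hil]
    omega

-- For `0 < l < i` the bound is `R_l - R_{l+1} + a_{l+1,n}` with row sums `R`: it telescopes.
lemma sum_epsLowerBound (hi : 1 ≤ i) (hin : i ≤ n) (hsupp : ∀ p, i < p → a p n = 0) :
    ∑ l ∈ range (n + 1), epsLowerBound n i m a l = m := by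
  set R : ℕ → ℤ := fun l => ∑ j ∈ Icc i n, (a l j : ℤ)
  have h0 : epsLowerBound n i m a 0 = m - R 1 - ∑ j ∈ Icc 2 n, (a j n : ℤ) := by
    simp [epsLowerBound, eps, R]
  have hmid : ∑ l ∈ Ico 1 i, epsLowerBound n i m a l
      = ∑ l ∈ Ico 1 i, (R l - R (l + 1)) + ∑ l ∈ Ico 1 i, (a (l + 1) n : ℤ) := by
    rw [← sum_add_distrib]
    refine sum_congr rfl fun l hl => ?_
    obtain ⟨hl, hli⟩ := mem_Ico.1 hl
    rw [epsLowerBound_of_lt hl hli, Fminus, Icc_self, sum_singleton]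
    push_cast
    ring
  have htel := sum_Ico_sub R hi
  have htop : ∑ l ∈ Ico i (n + 1), epsLowerBound n i m a l = R i := by
    rw [Ico_add_one_right_eq_Icc]
    exact sum_congr rfl fun l hl => epsLowerBound_of_le hi (mem_Icc.1 hl).1
  have hcol : ∑ j ∈ Icc 2 n, (a j n : ℤ) = ∑ l ∈ Ico 1 i, (a (l + 1) n : ℤ) := by
    have hshift := sum_Icc_succ_left (fun j => (a j n : ℤ)) 1 i
    simp only [Nat.reduceAdd] at hshift
    rw [sum_Icc_consecutive _ (by omega : 2 ≤ i + 1) hin, hshift, add_eq_left]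
    exact sum_eq_zero fun j hj => by rw [hsupp j (mem_Icc.1 hj).1]; rfl
  rw [range_eq_Ico, sum_eq_sum_Ico_succ_bot (Nat.succ_pos n),
    ← sum_Ico_consecutive _ hi (by omega : i ≤ n + 1), h0, hmid, htop, hcol]
  rw [sum_sub_distrib] at htel ⊢
  linarith

lemma eps_eq_epsLowerBound (hi : 1 ≤ i) (hin : i ≤ n) (hsupp : ∀ p, i < p → a p n = 0)
    (hsum : ∑ l ∈ range (n + 1), eps n i m a l = m) {l : ℕ} (hl : l ≤ n) :
    eps n i m a l = epsLowerBound n i m a l :=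
  ((sum_eq_sum_iff_of_le fun l _ => epsLowerBound_le_eps hi hin l).1
    (by rw [sum_epsLowerBound hi hin hsupp, hsum]) l (mem_range.2 (by omega))).symm

lemma Gplus_le_Gplus_self_of_eps_eq (hi : 1 ≤ i) {l r : ℕ} (hil : i < l)
    (h : eps n i m a l = a i l) (hr : r ∈ Icc 1 i) : Gplus i a l r ≤ Gplus i a l i := by
  have := Gplus_le_Gplus_qPlus (a := a) (l := l) hr
  rw [eps_eq_Gplus_sub hi hil] at h
  omega

lemma Fminus_le_Fminus_self_of_eps_eq {l r : ℕ} (hl : 1 ≤ l) (hli : l < i) (hin : i ≤ n)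
    (h : eps n i m a l = (Fminus n i a l n : ℤ) - ∑ j ∈ Icc i n, (a (l + 1) j : ℤ))
    (hr : r ∈ Icc i n) : Fminus n i a l r ≤ Fminus n i a l n := by
  have := Fminus_le_Fminus_qMinus (a := a) (l := l) hr
  rw [eps_eq_Fminus_sub hl hli hin] at h
  omega

end Epsilon

section Reconstruction

variable {n i : ℕ} {a : Mat} {c : ℕ → ℕ} {p : ℕ}

lemma le_of_Gplus_le (hpi : p < i) {l : ℕ} (hil : i < l) (hln : l ≤ n)
    (hbelow : ∀ s q, p < s → s ≤ i → i ≤ q → q ≤ n → a s q = c (s + q - i))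
    (hG : Gplus i a l p ≤ Gplus i a l i) : a p l ≤ c (p + l - i) := by
  have key := Gplus_add_sum_Ico (a := a) (l := l) hpi.le
  rw [sum_eq_sum_Ico_succ_bot hpi, sum_eq_sum_Ico_succ_bot hpi] at key
  have htail : ∑ s ∈ Ico (p + 1) i, a (s + 1) (l - 1) = ∑ s ∈ Ico (p + 1) i, a s l :=
    sum_congr rfl fun s hs => by
      obtain ⟨hps, hsi⟩ := mem_Ico.1 hs
      rw [hbelow (s + 1) (l - 1) (by omega) hsi (by omega) (by omega),
        hbelow s l hps hsi.le hil.le hln]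
      congr 1
      omega
  have hnext : a (p + 1) (l - 1) = c (p + l - i) := by
    rw [hbelow (p + 1) (l - 1) (by omega) hpi (by omega) (by omega)]
    congr 1
    omega
  omega

lemma sum_row_eq_of_Fminus_eq (hin : i ≤ n)
    (hnext : ∀ q, i ≤ q → q ≤ n → a (p + 1) q = c (p + 1 + q - i))
    (hFn : Fminus n i a p n = c p + ∑ j ∈ Icc i n, a (p + 1) j) :
    ∑ j ∈ Icc i n, a p j = ∑ j ∈ Icc i n, c (p + j - i) := by
  have hshift : ∑ j ∈ Ico i n, a (p + 1) j = ∑ j ∈ Ico i n, c (p + (j + 1) - i) :=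
    sum_congr rfl fun j hj => by
      rw [hnext j (mem_Ico.1 hj).1 (mem_Ico.1 hj).2.le]
      congr 1
      omega
  rw [Fminus, Icc_self, sum_singleton, sum_Icc_eq_sum_Ico_add_top (fun j => a (p + 1) j) hin,
    hshift] at hFn
  rw [sum_Icc_consecutive (fun j => c (p + j - i)) (Nat.le_succ i) hin, Icc_self, sum_singleton,
    sum_Icc_succ_left, Nat.add_sub_cancel]
  omega

lemma row_eq_of_rows_below (hpi : p < i) (hin : i ≤ n)
    (hbelow : ∀ s q, p < s → s ≤ i → i ≤ q → q ≤ n → a s q = c (s + q - i))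
    (hG : ∀ l, i < l → l ≤ n → Gplus i a l p ≤ Gplus i a l i)
    (hF : Fminus n i a p i ≤ Fminus n i a p n)
    (hFn : Fminus n i a p n = c p + ∑ j ∈ Icc i n, a (p + 1) j)
    {q : ℕ} (hiq : i ≤ q) (hqn : q ≤ n) : a p q = c (p + q - i) := by
  have hle : ∀ j ∈ Icc i n, a p j ≤ c (p + j - i) := by
    intro j hj
    obtain ⟨hij, hjn⟩ := mem_Icc.1 hj
    rcases hij.eq_or_lt with rfl | hij
    · have hFi : Fminus n i a p i = a p i + ∑ j ∈ Icc i n, a (p + 1) j := by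
        simp [Fminus]
      rw [Nat.add_sub_cancel]
      omega
    · exact le_of_Gplus_le hpi hij hjn hbelow (hG j hij hjn)
  have hrow := sum_row_eq_of_Fminus_eq hin
    (fun q hiq hqn => hbelow (p + 1) q (by omega) hpi hiq hqn) hFn
  exact (sum_eq_sum_iff_of_le hle).1 hrow q (mem_Icc.2 ⟨hiq, hqn⟩)

lemma eq_of_bounds_attained (hin : i ≤ n) (hrow : ∀ q, i ≤ q → q ≤ n → a i q = c q)
    (hG : ∀ l r, i < l → l ≤ n → r ∈ Icc 1 i → Gplus i a l r ≤ Gplus i a l i)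
    (hF : ∀ l, 1 ≤ l → l < i → Fminus n i a l i ≤ Fminus n i a l n)
    (hFn : ∀ l, 1 ≤ l → l < i → Fminus n i a l n = c l + ∑ j ∈ Icc i n, a (l + 1) j) :
    ∀ p q, 1 ≤ p → p ≤ i → i ≤ q → q ≤ n → a p q = c (p + q - i) := by
  suffices h : ∀ k p, 1 ≤ p → p ≤ i → i ≤ p + k → ∀ q, i ≤ q → q ≤ n → a p q = c (p + q - i) from
    fun p q hp hpi => h i p hp hpi (by omega) q
  intro k
  induction k with
  | zero =>
    intro p _ hpi hik q hiq hqn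
    obtain rfl : p = i := by omega
    rw [Nat.add_sub_cancel_left]
    exact hrow q hiq hqn
  | succ k ih =>
    intro p hp hpi hik q hiq hqn
    by_cases hk : i ≤ p + k
    · exact ih p hp hpi hk q hiq hqn
    · exact row_eq_of_rows_below (by omega) hin
        (fun s q' hps hsi => ih s (by omega) hsi (by omega) q')
        (fun l hil hln => hG l p hil hln (mem_Icc.2 ⟨hp, hpi⟩)) (hF p hp (by omega))
        (hFn p hp (by omega)) hiq hqn

end Reconstruction

/-- uniqueness of `b_Λ`: if `A ∈ B^{i,ℓ}` has `ε_l(A) = a_l` for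
all `l = 0,…,n` where `Σ a_j = ℓ`, then `A_{p,q} = a_{p+q-i}` on the whole index
range. -/
theorem stmt17 (n i ℓ : ℕ) (hi1 : 1 ≤ i) (hin : i ≤ n) (c : ℕ → ℕ)
    (hsum : ∑ j ∈ range (n + 1), c j = ℓ) (A : Mat) (hA : MemKR n i ℓ A)
    (heps : ∀ l, l ≤ n → eps n i ℓ A l = c l) :
    ∀ p q, 1 ≤ p → p ≤ i → i ≤ q → q ≤ n → A p q = c (p + q - i) := by
  have hsupp : ∀ p, i < p → A p n = 0 := fun p hp => hA.1 p n (by omega)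
  have hsum_eps : ∑ l ∈ range (n + 1), eps n i ℓ A l = ℓ := by
    rw [sum_congr rfl fun l hl => heps l (Nat.lt_succ_iff.1 (mem_range.1 hl)), ← hsum]
    push_cast
    rfl
  have htight : ∀ l, l ≤ n → eps n i ℓ A l = epsLowerBound n i ℓ A l :=
    fun l hl => eps_eq_epsLowerBound hi1 hin hsupp hsum_eps hl
  refine eq_of_bounds_attained hin (fun q hiq hqn => ?_) (fun l r hil hln hr => ?_)
    (fun l hl hli => ?_) (fun l hl hli => ?_)
  · have := (heps q hqn).symm.trans ((htight q hqn).trans (epsLowerBound_of_le hi1 hiq))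
    exact_mod_cast this.symm
  · exact Gplus_le_Gplus_self_of_eps_eq hi1 hil
      ((htight l hln).trans (epsLowerBound_of_le hi1 hil.le)) hr
  · exact Fminus_le_Fminus_self_of_eps_eq hl hli hin
      ((htight l (by omega)).trans (epsLowerBound_of_lt hl hli)) (left_mem_Icc.2 hin)
  · have := (heps l (by omega)).symm.trans
      ((htight l (by omega)).trans (epsLowerBound_of_lt hl hli))
    push_cast [← Nat.cast_sum] at this
    omega
end
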